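/- For every integer m ≥ 1, the expected number of m-stars of the one-step partial duplication G' of G satisfies E[S_m(G')] = (1 + (p·m + p^m)/n) · S_m(G) + (p·m·(m-1)/n) · S_{m-1}(G). -/

import Mathlib

open Finset

/-- The graph `G_{v,S}` obtained from `G` by adding one new vertex (`none`) adjacent
exactly to the vertices of `S`. -/
def SimpleGraph.extendVertex {V : Type*} (G : SimpleGraph V) (S : Finset V) :
    SimpleGraph (Option V) where
  Adj x y :=
    match x, y with
    | some u, some w => G.Adj u w
    | some u, none => u ∈ S
    | none, some w => w ∈ S
    | none, none => False
  symm := by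
    constructor
    rintro (_ | u) (_ | w) h
    · exact h
    · exact h
    · exact h
    · exact G.adj_symm h
  loopless := by
    constructor
    rintro (_ | u) h
    · exact h
    · exact G.irrefl h

instance {V : Type*} [DecidableEq V] (G : SimpleGraph V) [DecidableRel G.Adj] (S : Finset V) :
    DecidableRel (G.extendVertex S).Adj := fun x y =>
  match x, y with
  | some u, some w => inferInstanceAs (Decidable (G.Adj u w))
  | some u, none => inferInstanceAs (Decidable (u ∈ S))
  | none, some w => inferInstanceAs (Decidable (w ∈ S))
  | none, none => inferInstanceAs (Decidable False)

/-- `F_k(G)`: the number of vertices of `G` of degree exactly `k`. -/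
def degCount {V : Type*} [Fintype V] (G : SimpleGraph V) [DecidableRel G.Adj] (k : ℕ) : ℕ :=
  (Finset.univ.filter fun v => G.degree v = k).card

/-- `S_k(G) := Σ_{ℓ ≥ k} ℓ(ℓ-1)⋯(ℓ-k+1) F_ℓ(G)`, the number of `k`-stars of `G`
(note `S_0(G) = |V|`, since the descending factorial is `1` for `k = 0`). -/
noncomputable def starCount {V : Type*} [Fintype V] (G : SimpleGraph V)
    [DecidableRel G.Adj] (k : ℕ) : ℝ :=
  ∑' ℓ : ℕ, (ℓ.descFactorial k : ℝ) * (degCount G ℓ : ℝ)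

/-! Write `(d)ₘ = d.descFactorial m`, so that `S_m(G) = ∑ v, (deg v)ₘ`. The new vertex raises by
one exactly the degrees of the vertices of `S`, hence by Pascal's rule
`S_m(G_{v,S}) = S_m(G) + (|S|)ₘ + m ∑_{u ∈ S} (deg u)ₘ₋₁`.
Under the binomial weights, `S ⊆ N(v)` contains a fixed `R ⊆ N(v)` with probability `p^|R|`;
counting the `m`-subsets, resp. the points, of `S` gives `E (|S|)ₘ = p^m (deg v)ₘ` and
`E ∑_{u ∈ S} f u = p ∑_{u ∈ N(v)} f u`. Summing over `v`, each `u` is counted `deg u` times,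
and `d (d)ₘ₋₁ = (d)ₘ + (m - 1) (d)ₘ₋₁`. -/

namespace Nat

theorem succ_descFactorial_eq_add (n m : ℕ) :
    (n + 1).descFactorial m = n.descFactorial m + m * n.descFactorial (m - 1) := by
  cases m with
  | zero => simp
  | succ k =>
    simp only [descFactorial_eq_factorial_mul_choose, choose_succ_succ, factorial_succ,
      add_tsub_cancel_right]
    ring

theorem mul_descFactorial_eq_add (n k : ℕ) :
    n * n.descFactorial k = n.descFactorial (k + 1) + k * n.descFactorial k := by
  rcases le_or_gt k n with h | h
  · rw [descFactorial_succ, ← Nat.add_mul, Nat.sub_add_cancel h]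
  · simp [descFactorial_of_lt h]

end Nat

namespace Finset

variable {α : Type*} [DecidableEq α]

theorem sum_powerset_filter_superset (p : ℝ) {R T : Finset α} (hRT : R ⊆ T) :
    ∑ S ∈ T.powerset with R ⊆ S, p ^ #S * (1 - p) ^ (#T - #S) = p ^ #R := by
  have hprod : ∏ i ∈ T, (p + if i ∉ R then 1 - p else 0) = p ^ #R :=
    calc ∏ i ∈ T, (p + if i ∉ R then 1 - p else 0)
        _ = ∏ i ∈ T, if i ∈ R then p else 1 :=
          prod_congr rfl fun i _ => by by_cases hi : i ∈ R <;> simp [hi]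
        _ = p ^ #R := by rw [prod_ite_mem, inter_eq_right.2 hRT, prod_const]
  rw [← hprod, prod_add, sum_filter]
  refine sum_congr rfl fun S hS => ?_
  rw [mem_powerset] at hS
  rw [prod_const, prod_ite_zero, prod_const, card_sdiff_of_subset hS]
  have hcover : (∀ i ∈ T \ S, i ∉ R) ↔ R ⊆ S :=
    ⟨fun h i hi => by_contra fun hiS => h i (mem_sdiff.2 ⟨hRT hi, hiS⟩) hi,
      fun h i hi hiR => (mem_sdiff.1 hi).2 (h hiR)⟩
  simp only [hcover]
  split_ifs <;> ring

theorem sum_powerset_weights (p : ℝ) (T : Finset α) :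
    ∑ S ∈ T.powerset, p ^ #S * (1 - p) ^ (#T - #S) = 1 := by
  simpa using sum_powerset_filter_superset p (empty_subset T)

theorem sum_powerset_mul_sum (p : ℝ) (T : Finset α) (f : α → ℝ) :
    ∑ S ∈ T.powerset, p ^ #S * (1 - p) ^ (#T - #S) * ∑ u ∈ S, f u = p * ∑ u ∈ T, f u := by
  simp_rw [mul_sum]
  rw [sum_comm' (t' := T) (s' := fun u => T.powerset.filter ({u} ⊆ ·))]
  · refine sum_congr rfl fun u hu => ?_
    rw [← sum_mul, sum_powerset_filter_superset p (singleton_subset_iff.2 hu), card_singleton,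
      pow_one]
  · intro S u
    simp only [mem_filter, mem_powerset, singleton_subset_iff]
    exact ⟨fun ⟨hS, hu⟩ => ⟨⟨hS, hu⟩, hS hu⟩, fun ⟨⟨hS, hu⟩, _⟩ => ⟨hS, hu⟩⟩

theorem sum_powerset_mul_descFactorial_card (p : ℝ) (T : Finset α) (m : ℕ) :
    ∑ S ∈ T.powerset, p ^ #S * (1 - p) ^ (#T - #S) * ((#S).descFactorial m : ℝ)
      = p ^ m * ((#T).descFactorial m : ℝ) := by
  have hswap : ∀ S R, S ∈ T.powerset ∧ R ∈ S.powersetCard m ↔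
      S ∈ T.powerset.filter (R ⊆ ·) ∧ R ∈ T.powersetCard m := by
    intro S R
    simp only [mem_filter, mem_powerset, mem_powersetCard]
    exact ⟨fun ⟨hS, hR, hm⟩ => ⟨⟨hS, hR⟩, hR.trans hS, hm⟩,
      fun ⟨⟨hS, hR⟩, _, hm⟩ => ⟨hS, hR, hm⟩⟩
  calc ∑ S ∈ T.powerset, p ^ #S * (1 - p) ^ (#T - #S) * ((#S).descFactorial m : ℝ)
      _ = m.factorial *
          ∑ S ∈ T.powerset, ∑ R ∈ S.powersetCard m, p ^ #S * (1 - p) ^ (#T - #S) := by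
        simp_rw [Nat.descFactorial_eq_factorial_mul_choose, ← card_powersetCard, sum_const,
          nsmul_eq_mul, mul_sum]
        push_cast
        exact sum_congr rfl fun S _ => by ring
      _ = m.factorial * ∑ R ∈ T.powersetCard m, p ^ #R := by
        rw [sum_comm' hswap]
        exact congrArg _ <| sum_congr rfl fun R hR =>
          sum_powerset_filter_superset p (mem_powersetCard.1 hR).1
      _ = p ^ m * ((#T).descFactorial m : ℝ) := by
        rw [sum_congr rfl fun R hR => by rw [(mem_powersetCard.1 hR).2], sum_const,
          card_powersetCard, Nat.descFactorial_eq_factorial_mul_choose]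
        push_cast
        ring

end Finset

namespace SimpleGraph

section extendVertex

variable {V : Type*} {G : SimpleGraph V} {S : Finset V} {u w : V}

@[simp] theorem extendVertex_adj_some_some : (G.extendVertex S).Adj (some u) (some w) ↔ G.Adj u w :=
  Iff.rfl

@[simp] theorem extendVertex_adj_some_none : (G.extendVertex S).Adj (some u) none ↔ u ∈ S := Iff.rfl

@[simp] theorem extendVertex_adj_none_some : (G.extendVertex S).Adj none (some w) ↔ w ∈ S := Iff.rfl

variable [Fintype V] [DecidableEq V] [DecidableRel G.Adj]

theorem degree_extendVertex_none : (G.extendVertex S).degree none = #S := by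
  rw [← card_neighborFinset_eq_degree, neighborFinset_eq_filter, card_filter, Fintype.sum_option]
  simp

theorem degree_extendVertex_some :
    (G.extendVertex S).degree (some u) = G.degree u + if u ∈ S then 1 else 0 := by
  simp only [← card_neighborFinset_eq_degree, neighborFinset_eq_filter, card_filter,
    Fintype.sum_option]
  simp [add_comm]

end extendVertex

variable {V : Type*} [Fintype V] (G : SimpleGraph V) [DecidableRel G.Adj]

theorem starCount_eq_sum_descFactorial_degree (k : ℕ) :
    starCount G k = ∑ v, ((G.degree v).descFactorial k : ℝ) := by
  rw [starCount, tsum_eq_sum (s := univ.image fun v => G.degree v),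
    sum_comp (fun d : ℕ => (d.descFactorial k : ℝ)) fun v => G.degree v]
  · refine sum_congr rfl fun d _ => ?_
    rw [degCount, nsmul_eq_mul, mul_comm]
  · intro d hd
    have hnone : ∀ v ∈ univ, G.degree v ≠ d := fun v _ hv =>
      hd (hv ▸ mem_image_of_mem _ (mem_univ v))
    rw [degCount, filter_eq_empty_iff.2 hnone, card_empty, Nat.cast_zero, mul_zero]

theorem sum_degree_mul_descFactorial (k : ℕ) :
    ∑ v, (G.degree v : ℝ) * ((G.degree v).descFactorial k : ℝ)
      = starCount G (k + 1) + k * starCount G k := by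
  simp only [starCount_eq_sum_descFactorial_degree, mul_sum, ← sum_add_distrib]
  exact_mod_cast sum_congr rfl fun v _ => Nat.mul_descFactorial_eq_add (G.degree v) k

theorem sum_sum_neighborFinset (f : V → ℝ) :
    ∑ v, ∑ u ∈ G.neighborFinset v, f u = ∑ u, G.degree u * f u := by
  rw [sum_comm' (t' := univ) (s' := fun u => G.neighborFinset u)]
  · simp [← card_neighborFinset_eq_degree]
  · simp [adj_comm]

variable [DecidableEq V]

theorem starCount_extendVertex (S : Finset V) (m : ℕ) :
    starCount (G.extendVertex S) m
      = starCount G m + ((#S).descFactorial m : ℝ)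
        + m * ∑ u ∈ S, ((G.degree u).descFactorial (m - 1) : ℝ) := by
  have hsome (u : V) :
      ((G.degree u + if u ∈ S then 1 else 0).descFactorial m : ℝ)
        = (G.degree u).descFactorial m
          + if u ∈ S then m * ((G.degree u).descFactorial (m - 1) : ℝ) else 0 := by
    split_ifs <;> simp [Nat.succ_descFactorial_eq_add]
  simp only [starCount_eq_sum_descFactorial_degree, Fintype.sum_option, degree_extendVertex_none,
    degree_extendVertex_some, hsome, sum_add_distrib, sum_ite_mem, univ_inter, mul_sum]
  ring

theorem sum_powerset_mul_starCount_extendVertex (p : ℝ) (v : V) (m : ℕ) :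
    ∑ S ∈ (G.neighborFinset v).powerset,
        p ^ #S * (1 - p) ^ (G.degree v - #S) * starCount (G.extendVertex S) m
      = starCount G m + p ^ m * ((G.degree v).descFactorial m : ℝ)
        + m * p * ∑ u ∈ G.neighborFinset v, ((G.degree u).descFactorial (m - 1) : ℝ) := by
  rw [← card_neighborFinset_eq_degree]
  simp only [starCount_extendVertex, mul_add, sum_add_distrib, mul_left_comm _ (m : ℝ),
    ← mul_sum, ← sum_mul, sum_powerset_mul_sum, sum_powerset_mul_descFactorial_card,
    sum_powerset_weights]
  ring

theorem sum_sum_powerset_mul_starCount_extendVertex (p : ℝ) (k : ℕ) :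
    ∑ v, ∑ S ∈ (G.neighborFinset v).powerset,
        p ^ #S * (1 - p) ^ (G.degree v - #S) * starCount (G.extendVertex S) (k + 1)
      = (Fintype.card V + p * (k + 1) + p ^ (k + 1)) * starCount G (k + 1)
        + p * (k + 1) * k * starCount G k := by
  simp only [sum_powerset_mul_starCount_extendVertex, sum_add_distrib, sum_const, card_univ,
    nsmul_eq_mul, ← mul_sum, sum_sum_neighborFinset, add_tsub_cancel_right,
    sum_degree_mul_descFactorial, ← starCount_eq_sum_descFactorial_degree]
  push_cast
  ring

end SimpleGraph

theorem stmt_13_general {V : Type*} [Fintype V] [DecidableEq V]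
    (G : SimpleGraph V) [DecidableRel G.Adj]
    (hV : 1 ≤ Fintype.card V) (p : ℝ)
    (m : ℕ) (hm : 1 ≤ m) :
    (1 / (Fintype.card V : ℝ)) *
      ∑ v : V, ∑ S ∈ (G.neighborFinset v).powerset,
        p ^ S.card * (1 - p) ^ (G.degree v - S.card) * starCount (G.extendVertex S) m
      = (1 + (p * m + p ^ m) / (Fintype.card V : ℝ)) * starCount G m
        + (p * m * ((m : ℝ) - 1) / (Fintype.card V : ℝ)) * starCount G (m - 1) := by
  obtain ⟨k, rfl⟩ : ∃ k, m = k + 1 := ⟨m - 1, by omega⟩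
  have hn : (Fintype.card V : ℝ) ≠ 0 := Nat.cast_ne_zero.2 (by omega)
  rw [G.sum_sum_powerset_mul_starCount_extendVertex p k]
  field_simp
  push_cast
  ring

/-- For `m ≥ 1`, the expected number of `m`-stars of the one-step partial duplication of `G`
equals `(1 + (pm + p^m)/n)·S_m(G) + (pm(m-1)/n)·S_{m-1}(G)`. -/
theorem stmt_13 {V : Type*} [Fintype V] [DecidableEq V]
    (G : SimpleGraph V) [DecidableRel G.Adj]
    (hV : 1 ≤ Fintype.card V) (p : ℝ) (hp0 : 0 < p) (hp1 : p ≤ 1)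
    (m : ℕ) (hm : 1 ≤ m) :
    (1 / (Fintype.card V : ℝ)) *
      ∑ v : V, ∑ S ∈ (G.neighborFinset v).powerset,
        p ^ S.card * (1 - p) ^ (G.degree v - S.card) * starCount (G.extendVertex S) m
      = (1 + (p * m + p ^ m) / (Fintype.card V : ℝ)) * starCount G m
        + (p * m * ((m : ℝ) - 1) / (Fintype.card V : ℝ)) * starCount G (m - 1) :=
  stmt_13_general G hV p m hm
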